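/- arXiv:1007.4626 — 7 statements merged into one kernel-verified Lean document; each statement's English description precedes it below -/
import Mathlib

section
/- For a positive definite 3×3 block matrix A with blocks A_ij, the inequality det(A)·det(A₂₂) ≤ det(B)·det(C) holds, where B = [[A₁₁, A₁₂],[A₁₂*, A₂₂]] and C = [[A₂₂, A₂₃],[A₂₃*, A₃₃]]. (This is strong subadditivity for f = log.) -/
/-!
By Schur complements, `det A = det C · det (A₁₁ - Z C⁻¹ Zᴴ)` with `Z = [A₁₂ A₁₃]`, and
`det B = det A₂₂ · det (A₁₁ - A₁₂ A₂₂⁻¹ A₁₂ᴴ)`. The quadratic form of a Schur complement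
`P - Q D⁻¹ Qᴴ` at `x` is the minimum over `y` of the quadratic form of `[[P, Q], [Qᴴ, D]]` at
`(x, y)`; minimising only over `y` with vanishing `H₃`-component shows
`A₁₁ - Z C⁻¹ Zᴴ ≤ A₁₁ - A₁₂ A₂₂⁻¹ A₁₂ᴴ` in the Loewner order, and the determinant is monotone
on positive semidefinite matrices.
-/

open Matrix
open scoped ComplexOrder

noncomputable def blk3 {R : Type*} {n1 n2 n3 : Type*}
    (A11 : Matrix n1 n1 R) (A12 : Matrix n1 n2 R) (A13 : Matrix n1 n3 R)
    (A21 : Matrix n2 n1 R) (A22 : Matrix n2 n2 R) (A23 : Matrix n2 n3 R)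
    (A31 : Matrix n3 n1 R) (A32 : Matrix n3 n2 R) (A33 : Matrix n3 n3 R) :
    Matrix (n1 ⊕ (n2 ⊕ n3)) (n1 ⊕ (n2 ⊕ n3)) R :=
  Matrix.fromBlocks A11 (Matrix.of fun i => Sum.elim (A12 i) (A13 i))
    (Matrix.of (Sum.elim A21 A31)) (Matrix.fromBlocks A22 A23 A32 A33)

namespace Matrix

variable {𝕜 : Type*} [RCLike 𝕜] {m n : Type*} [Fintype m] [Fintype n] [DecidableEq n]

theorem one_le_det_of_posSemidef_sub_one {Y : Matrix n n 𝕜} (h : (Y - 1).PosSemidef) :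
    1 ≤ Y.det := by
  have hY : Y.IsHermitian := by simpa using h.1.add isHermitian_one
  -- each eigenvalue is `vᴴ Y v` at a unit eigenvector `v`
  have one_le_eigenvalues (i : n) : 1 ≤ hY.eigenvalues i := by
    have hv := h.re_dotProduct_nonneg (hY.eigenvectorBasis i)
    rwa [sub_mulVec, dotProduct_sub, map_sub, one_mulVec, ← hY.eigenvalues_eq, dotProduct_comm,
      ← EuclideanSpace.inner_eq_star_dotProduct, inner_self_eq_norm_sq_to_K,
      hY.eigenvectorBasis.orthonormal.1 i, RCLike.ofReal_one, one_pow, RCLike.one_re,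
      sub_nonneg] at hv
  rw [hY.det_eq_prod_eigenvalues, ← RCLike.ofReal_prod, ← RCLike.ofReal_one,
    RCLike.ofReal_le_ofReal]
  exact Finset.one_le_prod fun i _ => one_le_eigenvalues i

open scoped MatrixOrder in
theorem det_le_det_of_posSemidef_sub {P Q : Matrix n n 𝕜} (hP : P.PosSemidef)
    (hPQ : (Q - P).PosSemidef) : P.det ≤ Q.det := by
  by_cases hPdef : P.PosDef
  · obtain ⟨B, hB, rfl⟩ := CStarAlgebra.isStrictlyPositive_iff_eq_star_mul_self.mp
      hPdef.isStrictlyPositive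
    have hBdet := (isUnit_iff_isUnit_det B).mp hB
    have hBinvB : (B⁻¹)ᴴ * star B = 1 := by
      rw [star_eq_conjTranspose, ← conjTranspose_mul, mul_nonsing_inv B hBdet, conjTranspose_one]
    have hBBinv : star B * (B⁻¹)ᴴ = 1 := by
      rw [star_eq_conjTranspose, ← conjTranspose_mul, nonsing_inv_mul B hBdet, conjTranspose_one]
    set Y := (B⁻¹)ᴴ * Q * B⁻¹
    have hY : (Y - 1).PosSemidef := by
      convert hPQ.conjTranspose_mul_mul_same B⁻¹ using 1
      rw [Matrix.mul_sub, Matrix.sub_mul, ← Matrix.mul_assoc, hBinvB, Matrix.one_mul,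
        mul_nonsing_inv B hBdet]
    have hQY : Q = star B * Y * B := by
      rw [← Matrix.mul_assoc, ← Matrix.mul_assoc, hBBinv, Matrix.one_mul, Matrix.mul_assoc,
        nonsing_inv_mul B hBdet, Matrix.mul_one]
    clear_value Y
    calc (star B * B).det
        ≤ (star B * B).det * Y.det :=
          le_mul_of_one_le_right hP.det_nonneg (one_le_det_of_posSemidef_sub_one hY)
      _ = Q.det := by rw [hQY, det_mul, det_mul, det_mul]; ring
  · have hQ : Q.PosSemidef := by simpa using hPQ.add hP
    rw [hP.posDef_iff_det_ne_zero, not_not] at hPdef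
    rw [hPdef]
    exact hQ.det_nonneg

theorem dotProduct_mulVec_schur_le (A : Matrix m m 𝕜) (B : Matrix m n 𝕜) {D : Matrix n n 𝕜}
    (hD : D.PosDef) (x : m → 𝕜) (y : n → 𝕜) :
    star x ⬝ᵥ ((A - B * D⁻¹ * Bᴴ) *ᵥ x) ≤
      star (Sum.elim x y) ⬝ᵥ (fromBlocks A B Bᴴ D *ᵥ Sum.elim x y) := by
  have := hD.isUnit.invertible
  rw [dotProduct_mulVec, dotProduct_mulVec, schur_complement_eq₂₂ A B x y hD.1]
  exact le_add_of_nonneg_left <| dotProduct_mulVec (star _) D _ ▸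
    hD.posSemidef.dotProduct_mulVec_nonneg _

theorem dotProduct_mulVec_schur_eq (A : Matrix m m 𝕜) (B : Matrix m n 𝕜) {D : Matrix n n 𝕜}
    (hD : D.PosDef) (x : m → 𝕜) :
    star x ⬝ᵥ ((A - B * D⁻¹ * Bᴴ) *ᵥ x) =
      star (Sum.elim x (-((D⁻¹ * Bᴴ) *ᵥ x))) ⬝ᵥ
        (fromBlocks A B Bᴴ D *ᵥ Sum.elim x (-((D⁻¹ * Bᴴ) *ᵥ x))) := by
  have := hD.isUnit.invertible
  rw [dotProduct_mulVec, dotProduct_mulVec, schur_complement_eq₂₂ A B _ _ hD.1, add_neg_cancel,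
    dotProduct_zero, zero_add]

theorem dotProduct_mulVec_fromBlocks_extend_zero {n₁ n₂ : Type*} [Fintype n₁] [Fintype n₂]
    (P : Matrix m m 𝕜) (Q₁ : Matrix m n₁ 𝕜) (Q₂ : Matrix m n₂ 𝕜) (R₁₁ : Matrix n₁ n₁ 𝕜)
    (R₁₂ : Matrix n₁ n₂ 𝕜) (R₂₂ : Matrix n₂ n₂ 𝕜) (x : m → 𝕜) (y : n₁ → 𝕜) :
    star (Sum.elim x (Sum.elim y 0)) ⬝ᵥ
        (fromBlocks P (fromCols Q₁ Q₂) (fromCols Q₁ Q₂)ᴴ (fromBlocks R₁₁ R₁₂ R₁₂ᴴ R₂₂) *ᵥ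
          Sum.elim x (Sum.elim y 0)) =
      star (Sum.elim x y) ⬝ᵥ (fromBlocks P Q₁ Q₁ᴴ R₁₁ *ᵥ Sum.elim x y) := by
  simp [Function.star_sumElim, fromBlocks_mulVec, sumElim_dotProduct_sumElim,
    conjTranspose_fromCols_eq_fromRows_conjTranspose]

theorem posSemidef_fromCols_mul_inv_mul_sub {n₁ n₂ : Type*} [Fintype n₁] [Fintype n₂]
    [DecidableEq n₁] [DecidableEq n₂] (Q₁ : Matrix m n₁ 𝕜) (Q₂ : Matrix m n₂ 𝕜)
    {R₁₁ : Matrix n₁ n₁ 𝕜} {R₁₂ : Matrix n₁ n₂ 𝕜} {R₂₂ : Matrix n₂ n₂ 𝕜}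
    (hR : (fromBlocks R₁₁ R₁₂ R₁₂ᴴ R₂₂).PosDef) :
    (fromCols Q₁ Q₂ * (fromBlocks R₁₁ R₁₂ R₁₂ᴴ R₂₂)⁻¹ * (fromCols Q₁ Q₂)ᴴ
      - Q₁ * R₁₁⁻¹ * Q₁ᴴ).PosSemidef := by
  have hR₁₁ : R₁₁.PosDef := hR.submatrix Sum.inl_injective
  refine .of_dotProduct_mulVec_nonneg ((isHermitian_mul_mul_conjTranspose _ hR.inv.1).sub
    (isHermitian_mul_mul_conjTranspose _ hR₁₁.inv.1)) fun x => ?_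
  have key := dotProduct_mulVec_schur_le 0 (fromCols Q₁ Q₂) hR x
    (Sum.elim (-((R₁₁⁻¹ * Q₁ᴴ) *ᵥ x)) 0)
  rw [dotProduct_mulVec_fromBlocks_extend_zero, ← dotProduct_mulVec_schur_eq 0 Q₁ hR₁₁ x] at key
  simpa [sub_mulVec, dotProduct_sub, neg_mulVec] using key

end Matrix

theorem blk3_eq_fromBlocks {R : Type*} [Star R] {n1 n2 n3 : Type*} (A11 : Matrix n1 n1 R)
    (A12 : Matrix n1 n2 R) (A13 : Matrix n1 n3 R) (A22 : Matrix n2 n2 R) (A23 : Matrix n2 n3 R)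
    (A33 : Matrix n3 n3 R) :
    blk3 A11 A12 A13 A12ᴴ A22 A23 A13ᴴ A23ᴴ A33 =
      fromBlocks A11 (fromCols A12 A13) (fromCols A12 A13)ᴴ (fromBlocks A22 A23 A23ᴴ A33) := by
  rw [conjTranspose_fromCols_eq_fromRows_conjTranspose]
  rfl

/-- Strong subadditivity for f = log: `det A · det A₂₂ ≤ det B · det C` for a positive definite
3×3 block matrix `A`. -/
theorem det_ssa {n1 n2 n3 : Type*} [Fintype n1] [Fintype n2] [Fintype n3]
    [DecidableEq n1] [DecidableEq n2] [DecidableEq n3]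
    (A11 : Matrix n1 n1 ℂ) (A12 : Matrix n1 n2 ℂ) (A13 : Matrix n1 n3 ℂ)
    (A22 : Matrix n2 n2 ℂ) (A23 : Matrix n2 n3 ℂ) (A33 : Matrix n3 n3 ℂ)
    (hA : (blk3 A11 A12 A13 A12ᴴ A22 A23 A13ᴴ A23ᴴ A33).PosDef) :
    (blk3 A11 A12 A13 A12ᴴ A22 A23 A13ᴴ A23ᴴ A33).det * A22.det
      ≤ (Matrix.fromBlocks A11 A12 A12ᴴ A22).det
        * (Matrix.fromBlocks A22 A23 A23ᴴ A33).det := by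
  rw [blk3_eq_fromBlocks] at hA ⊢
  set C := fromBlocks A22 A23 A23ᴴ A33
  set Z := fromCols A12 A13
  have hC : C.PosDef := hA.submatrix Sum.inr_injective
  have hA22 : A22.PosDef := hC.submatrix Sum.inl_injective
  have := hC.isUnit.invertible
  have := hA22.isUnit.invertible
  have hschur_le : (A11 - Z * C⁻¹ * Zᴴ).det ≤ (A11 - A12 * A22⁻¹ * A12ᴴ).det :=
    det_le_det_of_posSemidef_sub ((PosDef.fromBlocks₂₂ A11 Z hC).mp hA.posSemidef) <| by
      rw [sub_sub_sub_cancel_left]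
      exact posSemidef_fromCols_mul_inv_mul_sub A12 A13 hC
  rw [det_fromBlocks₂₂ A11 Z, det_fromBlocks₂₂ A11 A12, invOf_eq_nonsing_inv, invOf_eq_nonsing_inv]
  calc C.det * (A11 - Z * C⁻¹ * Zᴴ).det * A22.det
      ≤ C.det * (A11 - A12 * A22⁻¹ * A12ᴴ).det * A22.det := by
        gcongr
        · exact hA22.det_pos.le
        · exact hC.det_pos.le
    _ = A22.det * (A11 - A12 * A22⁻¹ * A12ᴴ).det * C.det := by ring
end

section
/- For a positive definite 3×3 block matrix A, equality det(A)·det(A₂₂) = det(B)·det(C) holds if and only if A₁₃ = A₁₂ A₂₂⁻¹ A₂₃. -/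
/-!
Move `A₂₂` to the front and take the Schur complement `S = A / A₂₂`; it is positive definite
with blocks `A₁₁ - A₁₂ A₂₂⁻¹ A₁₂*`, `A₁₃ - A₁₂ A₂₂⁻¹ A₂₃`, `A₃₃ - A₂₃* A₂₂⁻¹ A₂₃`, and the
diagonal blocks are also the Schur complements of `A₂₂` in `B` and in `C`. After cancelling
`det A₂₂²` the identity becomes the equality case of Fischer's inequality for `S`, which holds
exactly when its off-diagonal block vanishes.

For Fischer's equality case, `det (D - N) = det D` with `N ≥ 0` and `D - N ≥ 0` becomes
`det (1 - K) = 1` with `K ≥ 0` after writing `D = Bᴴ B`; since `x ≤ exp (x - 1)` on each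
eigenvalue, `det (1 - K) ≤ exp (- tr K)`, so `tr K = 0` and `K = 0`.
-/

open Matrix
open scoped ComplexOrder

open scoped MatrixOrder

namespace Matrix

theorem fromBlocks_sub_conjTranspose_fromCols_mul_mul {α : Type*} [CommRing α] [StarRing α]
    {k m n : Type*} [Fintype k] {P : Matrix k k α} (hP : P.IsHermitian) (X : Matrix k m α)
    (Y : Matrix k n α) (A : Matrix m m α) (B : Matrix m n α) (D : Matrix n n α) :
    fromBlocks A B Bᴴ D - (fromCols X Y)ᴴ * P * fromCols X Y =
      fromBlocks (A - Xᴴ * P * X) (B - Xᴴ * P * Y) (B - Xᴴ * P * Y)ᴴ (D - Yᴴ * P * Y) := by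
  rw [conjTranspose_fromCols_eq_fromRows_conjTranspose, fromRows_mul, fromRows_mul_fromCols,
    sub_eq_add_neg, fromBlocks_neg, fromBlocks_add, conjTranspose_sub, conjTranspose_mul,
    conjTranspose_mul, hP.eq, conjTranspose_conjTranspose, ← Matrix.mul_assoc]
  simp only [sub_eq_add_neg]

variable {𝕜 : Type*} [RCLike 𝕜] {m n : Type*} [Fintype n] [DecidableEq n]

theorem PosSemidef.re_det_le_exp_trace_sub_card {L : Matrix n n 𝕜} (hL : L.PosSemidef) :
    RCLike.re L.det ≤ Real.exp (RCLike.re L.trace - Fintype.card n) := by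
  have hev := hL.eigenvalues_nonneg
  rw [hL.1.det_eq_prod_eigenvalues, hL.1.trace_eq_sum_eigenvalues, ← RCLike.ofReal_prod,
    ← RCLike.ofReal_sum, RCLike.ofReal_re, RCLike.ofReal_re, Fintype.card_eq_sum_ones,
    Nat.cast_sum, Nat.cast_one, ← Finset.sum_sub_distrib, Real.exp_sum]
  exact Finset.prod_le_prod (fun i _ => hev i) fun i _ => by
    linarith [Real.add_one_le_exp (hL.1.eigenvalues i - 1)]

theorem PosSemidef.eq_zero_of_det_one_sub_eq_one {K : Matrix n n 𝕜} (hK : K.PosSemidef)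
    (h1K : (1 - K).PosSemidef) (hdet : (1 - K).det = 1) : K = 0 := by
  have hexp := h1K.re_det_le_exp_trace_sub_card
  rw [hdet, trace_sub, trace_one, map_sub, RCLike.one_re, RCLike.natCast_re, sub_sub_cancel_left,
    ← Real.exp_zero, Real.exp_le_exp] at hexp
  have htr := RCLike.nonneg_iff.mp hK.trace_nonneg
  refine hK.trace_eq_zero_iff.mp (RCLike.ext ?_ ?_)
  · simp only [map_zero]; linarith [htr.1]
  · simpa using htr.2

theorem PosDef.exists_eq_conjTranspose_mul_self {R : Matrix n n 𝕜} (hR : R.PosDef) :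
    ∃ B : Matrix n n 𝕜, IsUnit B.det ∧ R = Bᴴ * B := by
  obtain ⟨B, rfl⟩ := CStarAlgebra.nonneg_iff_eq_star_mul_self.mp hR.posSemidef.nonneg
  rw [star_eq_conjTranspose] at hR ⊢
  exact ⟨B, isUnit_iff_ne_zero.mpr <| right_ne_zero_of_mul (det_mul Bᴴ B ▸ hR.det_pos.ne'), rfl⟩

theorem PosDef.eq_zero_of_conjTranspose_mul_mul_eq_zero {A : Matrix n n 𝕜} {B : Matrix n m 𝕜}
    (hA : A.PosDef) (h : Bᴴ * A * B = 0) : B = 0 := by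
  obtain ⟨C, hC, rfl⟩ := hA.exists_eq_conjTranspose_mul_self
  have : Invertible C := invertibleOfIsUnitDet C hC
  have hCB : C * B = 0 := conjTranspose_mul_self_eq_zero.mp <| by
    rw [conjTranspose_mul, ← h, Matrix.mul_assoc, Matrix.mul_assoc, Matrix.mul_assoc]
  rw [← inv_mul_cancel_left_of_invertible C B, hCB, Matrix.mul_zero]

theorem PosDef.eq_zero_of_det_sub_eq {R N : Matrix n n 𝕜} (hR : R.PosDef) (hN : N.PosSemidef)
    (hRN : (R - N).PosSemidef) (hdet : (R - N).det = R.det) : N = 0 := by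
  obtain ⟨B, hB, rfl⟩ := hR.exists_eq_conjTranspose_mul_self
  have : Invertible B := invertibleOfIsUnitDet B hB
  have hconj : B⁻¹ᴴ * (Bᴴ * B) * B⁻¹ = 1 := by
    rw [conjTranspose_nonsing_inv, ← Matrix.mul_assoc, inv_mul_of_invertible, Matrix.one_mul,
      mul_inv_of_invertible]
  set K := B⁻¹ᴴ * N * B⁻¹
  have h1K : 1 - K = B⁻¹ᴴ * (Bᴴ * B - N) * B⁻¹ := by rw [Matrix.mul_sub, Matrix.sub_mul, hconj]
  have hK0 : K = 0 := by
    refine (hN.conjTranspose_mul_mul_same B⁻¹).eq_zero_of_det_one_sub_eq_one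
      (h1K ▸ hRN.conjTranspose_mul_mul_same B⁻¹) ?_
    rw [h1K, det_mul, det_mul, hdet, ← det_mul, ← det_mul, hconj, det_one]
  calc N = Bᴴ * K * B := by
        simp only [K, Matrix.mul_assoc, inv_mul_of_invertible, Matrix.mul_one]
        rw [conjTranspose_nonsing_inv, mul_inv_cancel_left_of_invertible]
    _ = 0 := by rw [hK0, Matrix.mul_zero, Matrix.zero_mul]

section Blocks

variable [Fintype m] [DecidableEq m]

theorem PosDef.schur_complement₁₁ {A : Matrix m m 𝕜} {B : Matrix m n 𝕜} {D : Matrix n n 𝕜}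
    (h : (fromBlocks A B Bᴴ D).PosDef) : (D - Bᴴ * A⁻¹ * B).PosDef := by
  have hA : A.PosDef := h.submatrix Sum.inl_injective
  have : Invertible A := invertibleOfIsUnitDet A (isUnit_iff_ne_zero.mpr hA.det_pos.ne')
  refine (((PosDef.fromBlocks₁₁ B D hA).mp h.posSemidef).posDef_iff_det_ne_zero).mpr ?_
  have hdet := h.det_pos.ne'
  rw [det_fromBlocks₁₁, invOf_eq_nonsing_inv] at hdet
  exact right_ne_zero_of_mul hdet

theorem PosDef.det_fromBlocks_eq_mul_iff {A : Matrix m m 𝕜} {B : Matrix m n 𝕜}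
    {D : Matrix n n 𝕜} (h : (fromBlocks A B Bᴴ D).PosDef) :
    (fromBlocks A B Bᴴ D).det = A.det * D.det ↔ B = 0 := by
  have hA : A.PosDef := h.submatrix Sum.inl_injective
  have hD : D.PosDef := h.submatrix Sum.inr_injective
  have : Invertible A := invertibleOfIsUnitDet A (isUnit_iff_ne_zero.mpr hA.det_pos.ne')
  rw [det_fromBlocks₁₁, invOf_eq_nonsing_inv, mul_right_inj' hA.det_pos.ne']
  constructor
  · intro hdet
    have hN := hA.inv.posSemidef.conjTranspose_mul_mul_same B
    exact hA.inv.eq_zero_of_conjTranspose_mul_mul_eq_zero <|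
      hD.eq_zero_of_det_sub_eq hN h.schur_complement₁₁.posSemidef hdet
  · rintro rfl
    simp

end Blocks

end Matrix

def Equiv.sumLeftComm (α β γ : Type*) : α ⊕ (β ⊕ γ) ≃ β ⊕ (α ⊕ γ) :=
  (sumAssoc α β γ).symm.trans (((sumComm α β).sumCongr (Equiv.refl γ)).trans (sumAssoc β α γ))

section ThreeBlocks

variable {n1 n2 n3 : Type*}

theorem blk3_submatrix_sumLeftComm {α : Type*} [InvolutiveStar α]
    (A11 : Matrix n1 n1 α) (A12 : Matrix n1 n2 α) (A13 : Matrix n1 n3 α)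
    (A22 : Matrix n2 n2 α) (A23 : Matrix n2 n3 α) (A33 : Matrix n3 n3 α) :
    (blk3 A11 A12 A13 A12ᴴ A22 A23 A13ᴴ A23ᴴ A33).submatrix (Equiv.sumLeftComm n2 n1 n3)
        (Equiv.sumLeftComm n2 n1 n3) =
      fromBlocks A22 (fromCols A12ᴴ A23) (fromCols A12ᴴ A23)ᴴ (fromBlocks A11 A13 A13ᴴ A33) := by
  ext (i | i | i) (j | j | j) <;>
    simp [blk3, Equiv.sumLeftComm, fromCols, conjTranspose_apply] <;> rfl

variable {𝕜 : Type*} [RCLike 𝕜] [Fintype n1] [Fintype n2] [Fintype n3] [DecidableEq n1]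
  [DecidableEq n2] [DecidableEq n3]
  {A11 : Matrix n1 n1 𝕜} {A12 : Matrix n1 n2 𝕜} {A13 : Matrix n1 n3 𝕜}
  {A22 : Matrix n2 n2 𝕜} {A23 : Matrix n2 n3 𝕜} {A33 : Matrix n3 n3 𝕜}

theorem det_blk3_eq_det_mul_det_schur (hA22 : A22.IsHermitian) [Invertible A22] :
    (blk3 A11 A12 A13 A12ᴴ A22 A23 A13ᴴ A23ᴴ A33).det = A22.det *
      (fromBlocks (A11 - A12 * A22⁻¹ * A12ᴴ) (A13 - A12 * A22⁻¹ * A23)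
        (A13 - A12 * A22⁻¹ * A23)ᴴ (A33 - A23ᴴ * A22⁻¹ * A23)).det := by
  rw [← det_submatrix_equiv_self (Equiv.sumLeftComm n2 n1 n3), blk3_submatrix_sumLeftComm,
    det_fromBlocks₁₁, invOf_eq_nonsing_inv,
    fromBlocks_sub_conjTranspose_fromCols_mul_mul hA22.inv, conjTranspose_conjTranspose]

theorem Matrix.PosDef.schur_complement_blk3
    (hA : (blk3 A11 A12 A13 A12ᴴ A22 A23 A13ᴴ A23ᴴ A33).PosDef) :
    (fromBlocks (A11 - A12 * A22⁻¹ * A12ᴴ) (A13 - A12 * A22⁻¹ * A23)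
      (A13 - A12 * A22⁻¹ * A23)ᴴ (A33 - A23ᴴ * A22⁻¹ * A23)).PosDef := by
  have hA' := blk3_submatrix_sumLeftComm A11 A12 A13 A22 A23 A33 ▸
    hA.submatrix (Equiv.sumLeftComm n2 n1 n3).injective
  have hA22 : A22.IsHermitian := (hA'.submatrix Sum.inl_injective).1
  simpa only [fromBlocks_sub_conjTranspose_fromCols_mul_mul hA22.inv, conjTranspose_conjTranspose]
    using hA'.schur_complement₁₁

end ThreeBlocks

/-- Equality `det A · det A₂₂ = det B · det C` holds iff `A₁₃ = A₁₂ A₂₂⁻¹ A₂₃`. -/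
theorem det_ssa_equality_iff {n1 n2 n3 : Type*} [Fintype n1] [Fintype n2] [Fintype n3]
    [DecidableEq n1] [DecidableEq n2] [DecidableEq n3]
    (A11 : Matrix n1 n1 ℂ) (A12 : Matrix n1 n2 ℂ) (A13 : Matrix n1 n3 ℂ)
    (A22 : Matrix n2 n2 ℂ) (A23 : Matrix n2 n3 ℂ) (A33 : Matrix n3 n3 ℂ)
    (hA : (blk3 A11 A12 A13 A12ᴴ A22 A23 A13ᴴ A23ᴴ A33).PosDef) :
    ((blk3 A11 A12 A13 A12ᴴ A22 A23 A13ᴴ A23ᴴ A33).det * A22.det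
      = (Matrix.fromBlocks A11 A12 A12ᴴ A22).det
        * (Matrix.fromBlocks A22 A23 A23ᴴ A33).det)
      ↔ A13 = A12 * A22⁻¹ * A23 := by
  have hA22 : A22.PosDef :=
    (hA.submatrix Sum.inr_injective : (fromBlocks A22 A23 A23ᴴ A33).PosDef).submatrix
      Sum.inl_injective
  have hd := hA22.det_pos.ne'
  have : Invertible A22 := invertibleOfIsUnitDet A22 (isUnit_iff_ne_zero.mpr hd)
  rw [det_blk3_eq_det_mul_det_schur hA22.1, det_fromBlocks₂₂ _ _ _ A22, det_fromBlocks₁₁ A22,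
    invOf_eq_nonsing_inv, mul_right_comm, mul_mul_mul_comm,
    mul_right_inj' (mul_ne_zero hd hd), hA.schur_complement_blk3.det_fromBlocks_eq_mul_iff,
    sub_eq_zero]
end

section
/- If A is a positive semidefinite 3×3 block matrix with A₂₃ = 0 (or A₁₂ = 0), then strong subadditivity Tr f(A) + Tr f(A₂₂) ≤ Tr f(B) + Tr f(C) holds for every concave continuous function f : [0,∞) → ℝ. -/
/-! Both cases come from the two-block inequality `Tr f(M) ≤ Tr f(P) + Tr f(Q)` for a positive
semidefinite `M = [[P, X], [Y, Q]]`: when `A₂₃ = 0` view `A` as `[[B, *], [*, A₃₃]]`, and `C` is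
block diagonal, so `Tr f(C) = Tr f(A₂₂) + Tr f(A₃₃)`; when `A₁₂ = 0` view `A` as
`[[A₁₁, *], [*, C]]`, and `Tr f(B) = Tr f(A₁₁) + Tr f(A₂₂)`.

The two-block inequality is Peierls' inequality. For any unitary `W`, the diagonal of `W⋆ M W` is
the image of the spectrum of `M` under the doubly stochastic matrix `(|(W⋆ U)ᵢⱼ|²)`, where `U`
diagonalises `M`, so Jensen's inequality bounds `∑ f(λᵢ(M))` by the sum of `f` over that diagonal.
Taking `W = diag(U_P, U_Q)` with `U_P`, `U_Q` diagonalising `P` and `Q` puts the eigenvalues of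
`P` and `Q` on the diagonal. -/

open Matrix
open scoped ComplexOrder

theorem ConcaveOn.sum_le_sum_mulVec_of_mem_doublyStochastic {n : Type*} [Fintype n]
    [DecidableEq n] {s : Set ℝ} {f : ℝ → ℝ} (hf : ConcaveOn ℝ s f) {S : Matrix n n ℝ}
    (hS : S ∈ doublyStochastic ℝ n) {x : n → ℝ} (hx : ∀ j, x j ∈ s) :
    ∑ j, f (x j) ≤ ∑ i, f ((S *ᵥ x) i) :=
  calc ∑ j, f (x j) = ∑ j, (∑ i, S i j) * f (x j) := by
        simp only [sum_col_of_mem_doublyStochastic hS, one_mul]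
    _ = ∑ i, ∑ j, S i j • f (x j) := by
        simp only [Finset.sum_mul, smul_eq_mul]
        exact Finset.sum_comm
    _ ≤ ∑ i, f (∑ j, S i j • x j) := Finset.sum_le_sum fun i _ =>
        hf.le_map_sum (fun j _ => nonneg_of_mem_doublyStochastic hS)
          (sum_row_of_mem_doublyStochastic hS i) fun j _ => hx j
    _ = ∑ i, f ((S *ᵥ x) i) := by simp only [mulVec, dotProduct, smul_eq_mul]

namespace Matrix

variable {𝕜 : Type*} [RCLike 𝕜] {n m : Type*} [Fintype n] [DecidableEq n] [Fintype m]
  [DecidableEq m]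

theorem of_norm_sq_mem_doublyStochastic {U : Matrix n n 𝕜} (hU : U ∈ unitaryGroup n 𝕜) :
    of (fun i j => ‖U i j‖ ^ 2) ∈ doublyStochastic ℝ n := by
  refine mem_doublyStochastic_iff_sum.mpr ⟨fun _ _ => sq_nonneg _, fun i => ?_, fun j => ?_⟩
  · have h := congr_fun₂ ((mem_unitaryGroup_iff).mp hU) i i
    simp only [mul_apply, star_apply, RCLike.star_def, RCLike.mul_conj, one_apply_eq] at h
    exact_mod_cast h
  · have h := congr_fun₂ ((mem_unitaryGroup_iff').mp hU) j j
    simp only [mul_apply, star_apply, RCLike.star_def, RCLike.conj_mul, one_apply_eq] at h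
    exact_mod_cast h

theorem re_mul_diagonal_mul_star_apply_self (U : Matrix n n 𝕜) (d : n → ℝ) (i : n) :
    RCLike.re ((U * diagonal (RCLike.ofReal ∘ d) * star U : Matrix n n 𝕜) i i)
      = (of (fun i j => ‖U i j‖ ^ 2) *ᵥ d) i := by
  rw [mul_apply]
  simp only [mul_diagonal, star_apply, RCLike.star_def, Function.comp_apply, mulVec, dotProduct,
    of_apply, map_sum]
  refine Finset.sum_congr rfl fun j _ => ?_
  rw [mul_right_comm, RCLike.mul_conj]
  norm_cast

theorem fromBlocks_zero_zero_mem_unitaryGroup {α : Type*} [CommRing α] [StarRing α]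
    {U : Matrix n n α} {W : Matrix m m α} (hU : U ∈ unitaryGroup n α)
    (hW : W ∈ unitaryGroup m α) :
    fromBlocks U 0 0 W ∈ unitaryGroup (n ⊕ m) α := by
  rw [mem_unitaryGroup_iff, star_eq_conjTranspose, fromBlocks_conjTranspose, fromBlocks_multiply]
  rw [mem_unitaryGroup_iff, star_eq_conjTranspose] at hU hW
  simp [hU, hW]

theorem IsHermitian.sum_comp_eigenvalues_le_sum_comp_diag_conj {A : Matrix n n 𝕜}
    (hA : A.IsHermitian) {s : Set ℝ} {f : ℝ → ℝ} (hf : ConcaveOn ℝ s f)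
    (hs : ∀ i, hA.eigenvalues i ∈ s) (V : unitaryGroup n 𝕜) :
    ∑ i, f (hA.eigenvalues i)
      ≤ ∑ i, f (RCLike.re ((star (V : Matrix n n 𝕜) * A * (V : Matrix n n 𝕜)) i i)) := by
  set W : unitaryGroup n 𝕜 := star V * hA.eigenvectorUnitary
  have hconj : star (V : Matrix n n 𝕜) * A * (V : Matrix n n 𝕜)
      = (W : Matrix n n 𝕜) * diagonal (RCLike.ofReal ∘ hA.eigenvalues)
          * star (W : Matrix n n 𝕜) := by
    conv_lhs => rw [hA.spectral_theorem]
    simp [W, mul_assoc]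
  simp_rw [hconj, re_mul_diagonal_mul_star_apply_self]
  exact hf.sum_le_sum_mulVec_of_mem_doublyStochastic (of_norm_sq_mem_doublyStochastic W.2) hs

theorem IsHermitian.sum_comp_eigenvalues_fromBlocks_le {P : Matrix n n 𝕜} {X : Matrix n m 𝕜}
    {Y : Matrix m n 𝕜} {Q : Matrix m m 𝕜} (hM : (Matrix.fromBlocks P X Y Q).IsHermitian)
    (hP : P.IsHermitian) (hQ : Q.IsHermitian) {s : Set ℝ} {f : ℝ → ℝ} (hf : ConcaveOn ℝ s f)
    (hs : ∀ i, hM.eigenvalues i ∈ s) :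
    ∑ i, f (hM.eigenvalues i) ≤ ∑ i, f (hP.eigenvalues i) + ∑ j, f (hQ.eigenvalues j) := by
  let V : unitaryGroup (n ⊕ m) 𝕜 :=
    ⟨_, fromBlocks_zero_zero_mem_unitaryGroup hP.eigenvectorUnitary.2 hQ.eigenvectorUnitary.2⟩
  have hPdiag := hP.conjStarAlgAut_star_eigenvectorUnitary
  have hQdiag := hQ.conjStarAlgAut_star_eigenvectorUnitary
  rw [Unitary.conjStarAlgAut_star_apply] at hPdiag hQdiag
  have hdiag : ∀ i, RCLike.re ((star (V : Matrix (n ⊕ m) (n ⊕ m) 𝕜) * Matrix.fromBlocks P X Y Q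
      * (V : Matrix (n ⊕ m) (n ⊕ m) 𝕜)) i i) = Sum.elim hP.eigenvalues hQ.eigenvalues i := by
    simp only [V, star_eq_conjTranspose, fromBlocks_conjTranspose, fromBlocks_multiply]
      at hPdiag hQdiag ⊢
    rintro (i | j) <;> simp [hPdiag, hQdiag]
  refine (hM.sum_comp_eigenvalues_le_sum_comp_diag_conj hf hs V).trans_eq ?_
  simp only [hdiag, Fintype.sum_sum_type, Sum.elim_inl, Sum.elim_inr]

theorem IsHermitian.sum_comp_eigenvalues_eq_sum_roots_charpoly {A : Matrix n n 𝕜}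
    (hA : A.IsHermitian) (g : ℝ → ℝ) :
    ∑ i, g (hA.eigenvalues i) = (A.charpoly.roots.map (g ∘ RCLike.re)).sum := by
  simp [hA.roots_charpoly_eq_eigenvalues, Multiset.map_map]

theorem IsHermitian.sum_comp_eigenvalues_eq_of_charpoly_eq {A : Matrix n n 𝕜} {B : Matrix m m 𝕜}
    (hA : A.IsHermitian) (hB : B.IsHermitian) (h : A.charpoly = B.charpoly) (g : ℝ → ℝ) :
    ∑ i, g (hA.eigenvalues i) = ∑ i, g (hB.eigenvalues i) := by
  rw [hA.sum_comp_eigenvalues_eq_sum_roots_charpoly,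
    hB.sum_comp_eigenvalues_eq_sum_roots_charpoly, h]

theorem IsHermitian.sum_comp_eigenvalues_fromBlocks_zero₁₂ {P : Matrix n n 𝕜} {Y : Matrix m n 𝕜}
    {Q : Matrix m m 𝕜} (hM : (Matrix.fromBlocks P 0 Y Q).IsHermitian) (hP : P.IsHermitian)
    (hQ : Q.IsHermitian) (g : ℝ → ℝ) :
    ∑ i, g (hM.eigenvalues i) = ∑ i, g (hP.eigenvalues i) + ∑ j, g (hQ.eigenvalues j) := by
  rw [hM.sum_comp_eigenvalues_eq_sum_roots_charpoly, hP.sum_comp_eigenvalues_eq_sum_roots_charpoly,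
    hQ.sum_comp_eigenvalues_eq_sum_roots_charpoly, charpoly_fromBlocks_zero₁₂,
    Polynomial.roots_mul (mul_ne_zero P.charpoly_monic.ne_zero Q.charpoly_monic.ne_zero),
    Multiset.map_add, Multiset.sum_add]

theorem charpoly_submatrix_equiv {R : Type*} [CommRing R] (M : Matrix n n R) (e : m ≃ n) :
    (M.submatrix e e).charpoly = M.charpoly :=
  charpoly_reindex e.symm M

end Matrix

theorem blk3_submatrix_sumAssoc {R : Type*} {n1 n2 n3 : Type*}
    (A11 : Matrix n1 n1 R) (A12 : Matrix n1 n2 R) (A13 : Matrix n1 n3 R)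
    (A21 : Matrix n2 n1 R) (A22 : Matrix n2 n2 R) (A23 : Matrix n2 n3 R)
    (A31 : Matrix n3 n1 R) (A32 : Matrix n3 n2 R) (A33 : Matrix n3 n3 R) :
    (blk3 A11 A12 A13 A21 A22 A23 A31 A32 A33).submatrix (Equiv.sumAssoc n1 n2 n3)
        (Equiv.sumAssoc n1 n2 n3)
      = fromBlocks (fromBlocks A11 A12 A21 A22) (of (Sum.elim A13 A23))
          (of fun k => Sum.elim (A31 k) (A32 k)) A33 := by
  ext (⟨i | i⟩ | i) (⟨j | j⟩ | j) <;> rfl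

theorem ssa_of_A23_or_A12_zero_general {n1 n2 n3 : Type*} [Fintype n1] [Fintype n2] [Fintype n3]
    [DecidableEq n1] [DecidableEq n2] [DecidableEq n3]
    (f : ℝ → ℝ) (hconc : ConcaveOn ℝ (Set.Ici 0) f)
    (A11 : Matrix n1 n1 ℂ) (A12 : Matrix n1 n2 ℂ) (A13 : Matrix n1 n3 ℂ)
    (A22 : Matrix n2 n2 ℂ) (A23 : Matrix n2 n3 ℂ) (A33 : Matrix n3 n3 ℂ)
    (hA : (blk3 A11 A12 A13 A12ᴴ A22 A23 A13ᴴ A23ᴴ A33).PosSemidef)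
    (hzero : A23 = 0 ∨ A12 = 0)
    (hA22 : A22.IsHermitian)
    (hB : (Matrix.fromBlocks A11 A12 A12ᴴ A22).IsHermitian)
    (hC : (Matrix.fromBlocks A22 A23 A23ᴴ A33).IsHermitian) :
    (∑ i, f (hA.1.eigenvalues i)) + (∑ i, f (hA22.eigenvalues i))
      ≤ (∑ i, f (hB.eigenvalues i)) + (∑ i, f (hC.eigenvalues i)) := by
  obtain ⟨hA11, -, -, -⟩ := isHermitian_fromBlocks_iff.mp hB
  obtain ⟨-, -, -, hA33⟩ := isHermitian_fromBlocks_iff.mp hC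
  rcases hzero with rfl | rfl
  · have hA' := hA.submatrix (Equiv.sumAssoc n1 n2 n3)
    rw [blk3_submatrix_sumAssoc] at hA'
    have hA_eq : ∑ i, f (hA.1.eigenvalues i) = ∑ i, f (hA'.1.eigenvalues i) :=
      hA.1.sum_comp_eigenvalues_eq_of_charpoly_eq hA'.1
        (by rw [← blk3_submatrix_sumAssoc, charpoly_submatrix_equiv]) f
    have hA_le := hA'.1.sum_comp_eigenvalues_fromBlocks_le hB hA33 hconc hA'.eigenvalues_nonneg
    have hC_eq := hC.sum_comp_eigenvalues_fromBlocks_zero₁₂ hA22 hA33 f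
    linarith
  · have hA_le : ∑ i, f (hA.1.eigenvalues i) ≤ _ :=
      hA.1.sum_comp_eigenvalues_fromBlocks_le hA11 hC hconc hA.eigenvalues_nonneg
    have hB_eq := hB.sum_comp_eigenvalues_fromBlocks_zero₁₂ hA11 hA22 f
    linarith

/-- If `A₂₃ = 0` (or `A₁₂ = 0`), strong subadditivity
`Tr f(A) + Tr f(A₂₂) ≤ Tr f(B) + Tr f(C)` holds for every concave continuous
`f : [0,∞) → ℝ`, where `Tr f(M) = ∑ f(λᵢ(M))`. -/
theorem ssa_of_A23_or_A12_zero {n1 n2 n3 : Type*} [Fintype n1] [Fintype n2] [Fintype n3]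
    [DecidableEq n1] [DecidableEq n2] [DecidableEq n3]
    (f : ℝ → ℝ) (hconc : ConcaveOn ℝ (Set.Ici 0) f) (hcont : ContinuousOn f (Set.Ici 0))
    (A11 : Matrix n1 n1 ℂ) (A12 : Matrix n1 n2 ℂ) (A13 : Matrix n1 n3 ℂ)
    (A22 : Matrix n2 n2 ℂ) (A23 : Matrix n2 n3 ℂ) (A33 : Matrix n3 n3 ℂ)
    (hA : (blk3 A11 A12 A13 A12ᴴ A22 A23 A13ᴴ A23ᴴ A33).PosSemidef)
    (hzero : A23 = 0 ∨ A12 = 0)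
    (hA22 : A22.IsHermitian)
    (hB : (Matrix.fromBlocks A11 A12 A12ᴴ A22).IsHermitian)
    (hC : (Matrix.fromBlocks A22 A23 A23ᴴ A33).IsHermitian) :
    (∑ i, f (hA.1.eigenvalues i)) + (∑ i, f (hA22.eigenvalues i))
      ≤ (∑ i, f (hB.eigenvalues i)) + (∑ i, f (hC.eigenvalues i)) :=
  ssa_of_A23_or_A12_zero_general f hconc A11 A12 A13 A22 A23 A33 hA hzero hA22 hB hC
end

section
/- For a Hermitian matrix A in 2×2 block form with diagonal blocks A₁₁, A₂₂ and any concave function f : ℝ → ℝ, Tr f(A) ≤ Tr f(A₁₁) + Tr f(A₂₂). -/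
open Matrix

/-!
Let `U₁`, `U₂` be unitaries diagonalising `A₁₁`, `A₂₂`. Conjugating `A` by the block-diagonal
unitary `W = U₁ ⊕ U₂` puts the eigenvalues of `A₁₁` and `A₂₂` on the diagonal of `W* A W`.
If `A = U D U*` with `D` the diagonal of eigenvalues of `A`, then `W* A W = V D V*` for the
unitary `V = W* U`, so each diagonal entry of `W* A W` is the average of the eigenvalues of `A` with
weights `|V_ki|²`. These weights form a doubly stochastic matrix, so Jensen's inequality for the
concave `f`, applied row by row and summed using the unit column sums, gives the claim.
-/

theorem ConcaveOn.sum_le_sum_mulVec {n : Type*} [Fintype n] [DecidableEq n] {s : Set ℝ}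
    {f : ℝ → ℝ} (hf : ConcaveOn ℝ s f) {M : Matrix n n ℝ} (hM : M ∈ doublyStochastic ℝ n)
    {x : n → ℝ} (hx : ∀ i, x i ∈ s) :
    ∑ i, f (x i) ≤ ∑ k, f ((M *ᵥ x) k) :=
  calc ∑ i, f (x i) = ∑ k, ∑ i, M k i * f (x i) := by
        rw [Finset.sum_comm]
        simp_rw [← Finset.sum_mul, sum_col_of_mem_doublyStochastic hM, one_mul]
    _ ≤ ∑ k, f ((M *ᵥ x) k) := Finset.sum_le_sum fun k _ =>
        hf.le_map_sum (fun i _ => hM.1 k i) (sum_row_of_mem_doublyStochastic hM k) fun i _ => hx i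

namespace Matrix

variable {n m 𝕜 : Type*} [RCLike 𝕜]

def normSqEntries (V : Matrix n n 𝕜) : Matrix n n ℝ := of fun i j => ‖V i j‖ ^ 2

variable [Fintype n] [Fintype m]

theorem star_fromBlocks_mul_fromBlocks_mul_fromBlocks (U₁ : Matrix n n 𝕜) (U₂ : Matrix m m 𝕜)
    (A : Matrix n n 𝕜) (B : Matrix n m 𝕜) (C : Matrix m n 𝕜) (D : Matrix m m 𝕜) :
    star (fromBlocks U₁ 0 0 U₂) * fromBlocks A B C D * fromBlocks U₁ 0 0 U₂ =
      fromBlocks (star U₁ * A * U₁) (star U₁ * B * U₂) (star U₂ * C * U₁) (star U₂ * D * U₂) := by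
  simp [star_eq_conjTranspose, fromBlocks_conjTranspose, fromBlocks_multiply, Matrix.mul_assoc]

variable [DecidableEq n] [DecidableEq m]

theorem normSqEntries_mem_doublyStochastic {V : Matrix n n 𝕜} (hV : V ∈ unitaryGroup n 𝕜) :
    normSqEntries V ∈ doublyStochastic ℝ n := by
  refine mem_doublyStochastic_iff_sum.2 ⟨fun i j => sq_nonneg _, fun i => ?_, fun j => ?_⟩
  · have h := congr_fun₂ (mem_unitaryGroup_iff.1 hV) i i
    simp only [mul_apply, star_apply, RCLike.star_def, RCLike.mul_conj, one_apply_eq] at h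
    exact_mod_cast h
  · have h := congr_fun₂ (mem_unitaryGroup_iff'.1 hV) j j
    simp only [mul_apply, star_apply, RCLike.star_def, mul_comm (starRingEnd 𝕜 _),
      RCLike.mul_conj, one_apply_eq] at h
    exact_mod_cast h

theorem mul_diagonal_mul_star_apply_self (V : Matrix n n 𝕜) (d : n → ℝ) (k : n) :
    (V * diagonal (RCLike.ofReal ∘ d) * star V : Matrix n n 𝕜) k k =
      ((normSqEntries V *ᵥ d) k : 𝕜) := by
  rw [mul_apply]
  simp only [mul_diagonal, star_apply, RCLike.star_def, mulVec, dotProduct, normSqEntries,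
    of_apply, Function.comp_apply, RCLike.ofReal_sum, RCLike.ofReal_mul, RCLike.ofReal_pow]
  refine Finset.sum_congr rfl fun i _ => ?_
  rw [← RCLike.mul_conj]
  ring

theorem IsHermitian.sum_map_eigenvalues_le_sum_map_diag_conj {A : Matrix n n 𝕜}
    (hA : A.IsHermitian) {W : Matrix n n 𝕜} (hW : W ∈ unitaryGroup n 𝕜) {s : Set ℝ} {f : ℝ → ℝ}
    (hf : ConcaveOn ℝ s f) (hs : ∀ i, hA.eigenvalues i ∈ s) :
    ∑ i, f (hA.eigenvalues i) ≤ ∑ k, f (RCLike.re ((star W * A * W) k k)) := by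
  set V : Matrix n n 𝕜 := star W * hA.eigenvectorUnitary
  have hV : V ∈ unitaryGroup n 𝕜 :=
    Submonoid.mul_mem _ (Unitary.star_mem hW) hA.eigenvectorUnitary.2
  have hconj : star W * A * W = V * diagonal (RCLike.ofReal ∘ hA.eigenvalues) * star V := by
    conv_lhs => rw [hA.spectral_theorem]
    simp only [V, Unitary.conjStarAlgAut_apply, star_mul, star_star, Matrix.mul_assoc]
  simp_rw [hconj, mul_diagonal_mul_star_apply_self, RCLike.ofReal_re]
  exact hf.sum_le_sum_mulVec (normSqEntries_mem_doublyStochastic hV) hs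

theorem fromBlocks_mem_unitaryGroup {U₁ : Matrix n n 𝕜} {U₂ : Matrix m m 𝕜}
    (hU₁ : U₁ ∈ unitaryGroup n 𝕜) (hU₂ : U₂ ∈ unitaryGroup m 𝕜) :
    fromBlocks U₁ 0 0 U₂ ∈ unitaryGroup (n ⊕ m) 𝕜 := by
  rw [mem_unitaryGroup_iff, star_eq_conjTranspose, fromBlocks_conjTranspose, fromBlocks_multiply,
    ← star_eq_conjTranspose, ← star_eq_conjTranspose, mem_unitaryGroup_iff.1 hU₁,
    mem_unitaryGroup_iff.1 hU₂]
  simp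

theorem IsHermitian.star_eigenvectorUnitary_mul_mul_eigenvectorUnitary {A : Matrix n n 𝕜}
    (hA : A.IsHermitian) :
    (star (hA.eigenvectorUnitary : Matrix n n 𝕜) * A * hA.eigenvectorUnitary : Matrix n n 𝕜) =
      diagonal (RCLike.ofReal ∘ hA.eigenvalues) := by
  simpa using hA.conjStarAlgAut_star_eigenvectorUnitary

end Matrix

/-- Subadditivity: for a Hermitian 2×2 block matrix `A` and any concave `f : ℝ → ℝ`,
`Tr f(A) ≤ Tr f(A₁₁) + Tr f(A₂₂)`. -/
theorem trace_f_subadditive {n1 n2 : Type*} [Fintype n1] [Fintype n2]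
    [DecidableEq n1] [DecidableEq n2]
    (A11 : Matrix n1 n1 ℂ) (A12 : Matrix n1 n2 ℂ) (A22 : Matrix n2 n2 ℂ)
    (hA : (Matrix.fromBlocks A11 A12 A12ᴴ A22).IsHermitian)
    (hA11 : A11.IsHermitian) (hA22 : A22.IsHermitian)
    (f : ℝ → ℝ) (hconc : ConcaveOn ℝ Set.univ f) :
    (∑ i, f (hA.eigenvalues i))
      ≤ (∑ i, f (hA11.eigenvalues i)) + ∑ i, f (hA22.eigenvalues i) := by
  set U₁ : Matrix n1 n1 ℂ := ↑hA11.eigenvectorUnitary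
  set U₂ : Matrix n2 n2 ℂ := ↑hA22.eigenvectorUnitary
  have hW : fromBlocks U₁ 0 0 U₂ ∈ unitaryGroup (n1 ⊕ n2) ℂ :=
    fromBlocks_mem_unitaryGroup hA11.eigenvectorUnitary.2 hA22.eigenvectorUnitary.2
  calc ∑ i, f (hA.eigenvalues i)
      ≤ ∑ k, f (RCLike.re ((star (fromBlocks U₁ 0 0 U₂) * fromBlocks A11 A12 A12ᴴ A22 *
          fromBlocks U₁ 0 0 U₂) k k)) :=
        hA.sum_map_eigenvalues_le_sum_map_diag_conj hW hconc fun _ => Set.mem_univ _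
    _ = (∑ i, f (hA11.eigenvalues i)) + ∑ i, f (hA22.eigenvalues i) := by
        simp [star_fromBlocks_mul_fromBlocks_mul_fromBlocks, Fintype.sum_sum_type, U₁, U₂,
          hA11.star_eigenvectorUnitary_mul_mul_eigenvectorUnitary,
          hA22.star_eigenvectorUnitary_mul_mul_eigenvectorUnitary]
end

section
/- For every x ≥ 0 and 0 < t < 1, the representation xᵗ = (t sin(πt)/π) ∫₀^∞ λ^{t−1} log(1 + x/λ) dλ holds. -/
/-!
Substituting `l = x u` reduces the claim to `x = 1`. Integrating by parts against the antiderivative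
`u ^ t` of `t u ^ (t - 1)` (the boundary terms vanish because `0 < t < 1`) gives
`t ∫₀^∞ u ^ (t - 1) log (1 + 1 / u) du = ∫₀^∞ u ^ (t - 1) / (1 + u) du`, and the substitution
`v = u / (1 + u)` turns the latter into the Beta integral `B(t, 1 - t) = Γ(t) Γ(1 - t) = π / sin (π t)`.
-/

open Real MeasureTheory Set Filter Topology Asymptotics

lemma inv_one_add_isBigO_atTop : (fun u : ℝ => (1 + u)⁻¹) =O[atTop] (· ^ (-1 : ℝ)) := by
  simp only [rpow_neg_one]
  refine IsBigO.of_bound' ?_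
  filter_upwards [eventually_gt_atTop 0] with u hu
  rw [norm_of_nonneg (by positivity), norm_of_nonneg (by positivity)]
  exact inv_anti₀ hu (by linarith)

lemma inv_one_add_isBigO_nhdsGT : (fun u : ℝ => (1 + u)⁻¹) =O[𝓝[>] 0] (· ^ (-0 : ℝ)) := by
  simp only [neg_zero, rpow_zero]
  refine (Tendsto.isBigO_one ℝ (c := (1 + 0)⁻¹) ?_).mono nhdsWithin_le_nhds
  exact ((continuous_const.add continuous_id).tendsto 0).inv₀ (by norm_num)

lemma log_one_add_inv_isBigO_atTop :
    (fun u : ℝ => log (1 + u⁻¹)) =O[atTop] (· ^ (-1 : ℝ)) := by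
  simp only [rpow_neg_one]
  refine IsBigO.of_bound' ?_
  filter_upwards [eventually_gt_atTop 0] with u hu
  have hpos : 0 < u⁻¹ := inv_pos.2 hu
  rw [norm_of_nonneg (log_nonneg (by linarith)), norm_of_nonneg hpos.le]
  linarith [log_le_sub_one_of_pos (by linarith : 0 < 1 + u⁻¹)]

lemma log_one_add_inv_isBigO_nhdsGT {b : ℝ} (hb : 0 < b) :
    (fun u : ℝ => log (1 + u⁻¹)) =O[𝓝[>] 0] (· ^ (-b)) := by
  refine IsBigO.of_bound (2 ^ b / b) ?_
  filter_upwards [Ioo_mem_nhdsGT one_pos] with u ⟨hu0, hu1⟩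
  have hinv : 1 ≤ u⁻¹ := (one_le_inv₀ hu0).2 hu1.le
  rw [norm_of_nonneg (log_nonneg (by linarith)), norm_of_nonneg (by positivity)]
  calc log (1 + u⁻¹) ≤ log (2 * u⁻¹) := log_le_log (by positivity) (by linarith)
    _ ≤ (2 * u⁻¹) ^ b / b := log_le_rpow_div (by positivity) hb
    _ = 2 ^ b / b * u ^ (-b) := by
      rw [mul_rpow zero_le_two (by positivity), inv_rpow hu0.le, rpow_neg hu0.le]; ring

lemma integrableOn_rpow_mul_inv_one_add {t : ℝ} (ht0 : 0 < t) (ht1 : t < 1) :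
    IntegrableOn (fun u : ℝ => u ^ (t - 1) * (1 + u)⁻¹) (Ioi 0) := by
  refine mellin_convergent_of_isBigO_scalar ?_ inv_one_add_isBigO_atTop ht1
    inv_one_add_isBigO_nhdsGT ht0
  refine ContinuousOn.locallyIntegrableOn ?_ measurableSet_Ioi
  exact (continuousOn_const.add continuousOn_id).inv₀ fun u hu => (add_pos one_pos hu).ne'

lemma integrableOn_rpow_mul_log_one_add_inv {t : ℝ} (ht0 : 0 < t) (ht1 : t < 1) :
    IntegrableOn (fun u : ℝ => u ^ (t - 1) * log (1 + u⁻¹)) (Ioi 0) := by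
  refine mellin_convergent_of_isBigO_scalar ?_ log_one_add_inv_isBigO_atTop ht1
    (log_one_add_inv_isBigO_nhdsGT (half_pos ht0)) (half_lt_self ht0)
  refine ContinuousOn.locallyIntegrableOn ?_ measurableSet_Ioi
  exact (continuousOn_const.add (continuousOn_inv₀.mono fun u hu => ne_of_gt hu)).log
    fun u hu => (add_pos one_pos (inv_pos.2 hu)).ne'

lemma tendsto_rpow_mul_log_one_add_inv_nhdsGT {t : ℝ} (ht0 : 0 < t) :
    Tendsto (fun u : ℝ => u ^ t * log (1 + u⁻¹)) (𝓝[>] 0) (𝓝 0) := by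
  refine ((isBigO_refl _ _).mul (log_one_add_inv_isBigO_nhdsGT (half_pos ht0))).trans_tendsto ?_
  have h : Tendsto (fun u : ℝ => u ^ (t / 2)) (𝓝[>] 0) (𝓝 0) := by
    simpa [zero_rpow (half_pos ht0).ne'] using
      ((continuousAt_rpow_const 0 (t / 2) (.inr (half_pos ht0).le)).tendsto).mono_left
        nhdsWithin_le_nhds
  refine h.congr' ?_
  filter_upwards [self_mem_nhdsWithin] with u hu
  rw [← rpow_add hu]
  ring_nf

lemma tendsto_rpow_mul_log_one_add_inv_atTop {t : ℝ} (ht1 : t < 1) :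
    Tendsto (fun u : ℝ => u ^ t * log (1 + u⁻¹)) atTop (𝓝 0) := by
  refine ((isBigO_refl _ _).mul log_one_add_inv_isBigO_atTop).trans_tendsto ?_
  refine (tendsto_rpow_neg_atTop (by linarith : 0 < 1 - t)).congr' ?_
  filter_upwards [eventually_gt_atTop 0] with u hu
  rw [← rpow_add hu]
  ring_nf

lemma mul_integral_rpow_mul_log_one_add_inv {t : ℝ} (ht0 : 0 < t) (ht1 : t < 1) :
    t * ∫ u in Ioi (0 : ℝ), u ^ (t - 1) * log (1 + u⁻¹) =
      ∫ u in Ioi (0 : ℝ), u ^ (t - 1) * (1 + u)⁻¹ := by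
  have hU : ∀ u ∈ Ioi (0 : ℝ), HasDerivAt (fun u => u ^ t) (t * u ^ (t - 1)) u :=
    fun u hu => hasDerivAt_rpow_const (.inl (ne_of_gt hu))
  have hV : ∀ u ∈ Ioi (0 : ℝ),
      HasDerivAt (fun u => log (1 + u⁻¹)) (-(u * (1 + u))⁻¹) u := by
    intro u hu
    have hu : (0 : ℝ) < u := hu
    refine ((hasDerivAt_inv hu.ne').const_add 1).log (by positivity) |>.congr_deriv ?_
    field_simp
    ring
  have hUV : ∀ u ∈ Ioi (0 : ℝ),
      t * u ^ (t - 1) * log (1 + u⁻¹) + u ^ t * -(u * (1 + u))⁻¹ =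
        t * (u ^ (t - 1) * log (1 + u⁻¹)) - u ^ (t - 1) * (1 + u)⁻¹ := by
    intro u hu
    have hu : (0 : ℝ) < u := hu
    rw [rpow_sub_one hu.ne']
    field_simp
    ring
  have hlog := (integrableOn_rpow_mul_log_one_add_inv ht0 ht1).const_mul t
  have hinv := integrableOn_rpow_mul_inv_one_add ht0 ht1
  have h := integral_Ioi_deriv_mul_eq_sub hU hV
    (IntegrableOn.congr_fun (hlog.sub hinv) (fun u hu => (hUV u hu).symm) measurableSet_Ioi)
    (tendsto_rpow_mul_log_one_add_inv_nhdsGT ht0) (tendsto_rpow_mul_log_one_add_inv_atTop ht1)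
  rwa [setIntegral_congr_fun measurableSet_Ioi hUV, integral_sub hlog hinv,
    integral_const_mul, sub_self, sub_eq_zero] at h

lemma integral_Ioo_rpow_mul_one_sub_rpow {a b : ℝ} (ha : 0 < a) (hb : 0 < b) :
    ∫ x in Ioo (0 : ℝ) 1, x ^ (a - 1) * (1 - x) ^ (b - 1) = Gamma a * Gamma b / Gamma (a + b) := by
  have hbeta := Complex.betaIntegral_eq_Gamma_mul_div a b (by simpa) (by simpa)
  rw [Complex.betaIntegral, intervalIntegral.integral_of_le zero_le_one,
    integral_Ioc_eq_integral_Ioo] at hbeta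
  apply Complex.ofReal_injective
  rw [← integral_complex_ofReal, Complex.ofReal_div, Complex.ofReal_mul,
    ← Complex.Gamma_ofReal, ← Complex.Gamma_ofReal, ← Complex.Gamma_ofReal, Complex.ofReal_add,
    ← hbeta]
  refine setIntegral_congr_fun measurableSet_Ioo fun x ⟨hx0, hx1⟩ => ?_
  rw [Complex.ofReal_mul, Complex.ofReal_cpow hx0.le, Complex.ofReal_cpow (by linarith)]
  push_cast
  rfl

lemma integral_Ioi_rpow_mul_one_add_rpow (a b : ℝ) :
    ∫ u in Ioi (0 : ℝ), u ^ (a - 1) * (1 + u) ^ (-(a + b)) =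
      ∫ x in Ioo (0 : ℝ) 1, x ^ (a - 1) * (1 - x) ^ (b - 1) := by
  have himage : (fun u : ℝ => u / (1 + u)) '' Ioi 0 = Ioo 0 1 := by
    ext v
    constructor
    · rintro ⟨u, hu, rfl⟩
      have hu : (0 : ℝ) < u := hu
      exact ⟨by positivity, (div_lt_one (by positivity)).2 (by linarith)⟩
    · rintro ⟨hv0, hv1⟩
      refine ⟨v / (1 - v), div_pos hv0 (by linarith), ?_⟩
      field_simp [(by linarith : 1 - v ≠ 0)]
      ring
  have hderiv : ∀ u ∈ Ioi (0 : ℝ),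
      HasDerivWithinAt (fun u : ℝ => u / (1 + u)) ((1 + u) ^ (-2 : ℝ)) (Ioi 0) u := by
    intro u hu
    have h1u : (0 : ℝ) < 1 + u := add_pos one_pos hu
    refine ((hasDerivAt_id' u).div ((hasDerivAt_id' u).const_add 1) h1u.ne').hasDerivWithinAt
      |>.congr_deriv ?_
    rw [rpow_neg h1u.le, rpow_two]
    field_simp
    ring
  have hinj : InjOn (fun u : ℝ => u / (1 + u)) (Ioi 0) := by
    intro u hu v hv huv
    have hu : (0 : ℝ) < u := hu
    have hv : (0 : ℝ) < v := hv
    field_simp at huv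
    linarith
  rw [← himage, integral_image_eq_integral_abs_deriv_smul measurableSet_Ioi hderiv hinj]
  refine setIntegral_congr_fun measurableSet_Ioi fun u hu => ?_
  have hu : (0 : ℝ) < u := hu
  have h1u : (0 : ℝ) < 1 + u := add_pos one_pos hu
  have hsub : 1 - u / (1 + u) = (1 + u)⁻¹ := by field_simp; ring
  rw [smul_eq_mul, abs_of_pos (by positivity), hsub, div_rpow hu.le h1u.le, inv_rpow h1u.le,
    ← rpow_neg h1u.le, div_eq_mul_inv, ← rpow_neg h1u.le]
  calc u ^ (a - 1) * (1 + u) ^ (-(a + b))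
      = u ^ (a - 1) * ((1 + u) ^ (-2 : ℝ) * (1 + u) ^ (-(a - 1)) * (1 + u) ^ (-(b - 1))) := by
        rw [← rpow_add h1u, ← rpow_add h1u]; ring_nf
    _ = _ := by ring

lemma integral_Ioi_rpow_mul_inv_one_add {t : ℝ} (ht0 : 0 < t) (ht1 : t < 1) :
    ∫ u in Ioi (0 : ℝ), u ^ (t - 1) * (1 + u)⁻¹ = π / sin (π * t) := by
  have h := integral_Ioi_rpow_mul_one_add_rpow t (1 - t)
  rw [integral_Ioo_rpow_mul_one_sub_rpow ht0 (by linarith), add_sub_cancel, Gamma_one, div_one,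
    Gamma_mul_Gamma_one_sub] at h
  simpa only [rpow_neg_one] using h

lemma integral_Ioi_rpow_mul_comp_div (f : ℝ → ℝ) (s : ℝ) {a : ℝ} (ha : 0 < a) :
    ∫ l in Ioi (0 : ℝ), l ^ (s - 1) * f (l / a) = a ^ s * ∫ u in Ioi (0 : ℝ), u ^ (s - 1) * f u := by
  have h := integral_comp_mul_left_Ioi' (fun l => l ^ (s - 1) * f (l / a)) 0 ha
  rw [mul_zero] at h
  rw [← h, smul_eq_mul, ← integral_const_mul, ← integral_const_mul]
  refine setIntegral_congr_fun measurableSet_Ioi fun u hu => ?_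
  rw [mul_div_cancel_left₀ u ha.ne', mul_rpow ha.le (le_of_lt hu), rpow_sub_one ha.ne']
  field_simp

/-- For `x ≥ 0` and `0 < t < 1`,
`xᵗ = (t sin(πt)/π) ∫₀^∞ λ^{t−1} log(1 + x/λ) dλ`. -/
theorem rpow_eq_log_integral (x t : ℝ) (hx : 0 ≤ x) (ht0 : 0 < t) (ht1 : t < 1) :
    x ^ t = (t * Real.sin (π * t) / π) *
      ∫ l in Set.Ioi (0 : ℝ), l ^ (t - 1) * Real.log (1 + x / l) := by
  rcases hx.eq_or_lt with rfl | hx0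
  · simp [zero_rpow ht0.ne']
  have hscale := integral_Ioi_rpow_mul_comp_div (fun u => log (1 + u⁻¹)) t hx0
  simp only [inv_div] at hscale
  have hsin : sin (π * t) ≠ 0 :=
    (sin_pos_of_pos_of_lt_pi (by positivity) (by nlinarith [pi_pos])).ne'
  have hparts := mul_integral_rpow_mul_log_one_add_inv ht0 ht1
  rw [integral_Ioi_rpow_mul_inv_one_add ht0 ht1] at hparts
  rw [hscale]
  calc x ^ t = x ^ t * (sin (π * t) / π) * (π / sin (π * t)) := by field_simp
    _ = _ := by rw [← hparts]; ring
end

section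
/- The function κ(x) = −x log x + (x+1) log(x+1) admits the integral representation κ(x) = ∫₀¹ (1 − x/(1+t) − t/(x+t)) dt + ∫₁^∞ ((x+1)/t − x/(1+t) − 1/(x+t)) dt for all x > 0. -/
/-!
On `(0, 1)` the first integrand is `x ((x + t)⁻¹ - (1 + t)⁻¹)`, and on `(1, ∞)` the second is
`x (t⁻¹ - (1 + t)⁻¹) + (t⁻¹ - (x + t)⁻¹)`. Each kernel `(a + t)⁻¹ - (b + t)⁻¹` has the
antiderivative `log (a + t) - log (b + t)`, which tends to `0` at infinity; for `a ≤ b` the kernel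
is nonnegative, hence integrable on half-lines.
-/

open Real MeasureTheory Set Filter Topology

namespace Real

theorem hasDerivAt_log_add_sub_log_add {a b t : ℝ} (ha : 0 < a + t) (hb : 0 < b + t) :
    HasDerivAt (fun s => log (a + s) - log (b + s)) ((a + t)⁻¹ - (b + t)⁻¹) t := by
  have hda := ((hasDerivAt_id' t).const_add a).log ha.ne'
  have hdb := ((hasDerivAt_id' t).const_add b).log hb.ne'
  simpa [one_div] using hda.fun_sub hdb

theorem tendsto_log_add_sub_log_add_atTop (a b : ℝ) :
    Tendsto (fun s => log (a + s) - log (b + s)) atTop (𝓝 0) := by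
  have h := (tendsto_log_comp_add_sub_log a).sub (tendsto_log_comp_add_sub_log b)
  simpa [add_comm] using h

theorem integral_inv_add_sub_inv_add {a b c d : ℝ} (hcd : c ≤ d) (ha : 0 < a + c)
    (hb : 0 < b + c) :
    ∫ t in c..d, ((a + t)⁻¹ - (b + t)⁻¹)
      = (log (a + d) - log (b + d)) - (log (a + c) - log (b + c)) := by
  have hpos : ∀ t ∈ uIcc c d, 0 < a + t ∧ 0 < b + t := fun t ht => by
    rw [uIcc_of_le hcd] at ht
    constructor <;> linarith [ht.1]
  refine intervalIntegral.integral_eq_sub_of_hasDerivAt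
    (fun t ht => hasDerivAt_log_add_sub_log_add (hpos t ht).1 (hpos t ht).2) ?_
  refine ContinuousOn.intervalIntegrable ?_
  exact ((continuousOn_const.add continuousOn_id).inv₀ fun t ht => (hpos t ht).1.ne').sub
    ((continuousOn_const.add continuousOn_id).inv₀ fun t ht => (hpos t ht).2.ne')

section HalfLine

variable {a b c : ℝ}

private theorem hasDerivAt_log_add_sub_log_add_of_mem_Ici (hab : a ≤ b) (hc : 0 < a + c) :
    ∀ t ∈ Ici c, HasDerivAt (fun s => log (a + s) - log (b + s)) ((a + t)⁻¹ - (b + t)⁻¹) t :=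
  fun t ht => hasDerivAt_log_add_sub_log_add (by linarith [mem_Ici.1 ht])
    (by linarith [mem_Ici.1 ht])

private theorem inv_add_sub_inv_add_nonneg (hab : a ≤ b) (hc : 0 < a + c) :
    ∀ t ∈ Ioi c, 0 ≤ (a + t)⁻¹ - (b + t)⁻¹ :=
  fun t ht => sub_nonneg.2 <| inv_anti₀ (by linarith [mem_Ioi.1 ht]) (by linarith)

theorem integrableOn_Ioi_inv_add_sub_inv_add (hab : a ≤ b) (hc : 0 < a + c) :
    IntegrableOn (fun t => (a + t)⁻¹ - (b + t)⁻¹) (Ioi c) :=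
  integrableOn_Ioi_deriv_of_nonneg' (hasDerivAt_log_add_sub_log_add_of_mem_Ici hab hc)
    (inv_add_sub_inv_add_nonneg hab hc) (tendsto_log_add_sub_log_add_atTop a b)

theorem integral_Ioi_inv_add_sub_inv_add (hab : a ≤ b) (hc : 0 < a + c) :
    ∫ t in Ioi c, ((a + t)⁻¹ - (b + t)⁻¹) = log (b + c) - log (a + c) := by
  rw [integral_Ioi_of_hasDerivAt_of_nonneg' (hasDerivAt_log_add_sub_log_add_of_mem_Ici hab hc)
    (inv_add_sub_inv_add_nonneg hab hc) (tendsto_log_add_sub_log_add_atTop a b)]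
  ring

end HalfLine

end Real

/-- Integral representation of `κ(x) = −x log x + (x+1) log(x+1)`:
`κ(x) = ∫₀¹ (1 − x/(1+t) − t/(x+t)) dt + ∫₁^∞ ((x+1)/t − x/(1+t) − 1/(x+t)) dt`. -/
theorem kappa_integral_representation (x : ℝ) (hx : 0 < x) :
    -x * Real.log x + (x + 1) * Real.log (x + 1)
      = (∫ t in Set.Ioo (0 : ℝ) 1, (1 - x / (1 + t) - t / (x + t)))
        + ∫ t in Set.Ioi (1 : ℝ), ((x + 1) / t - x / (1 + t) - 1 / (x + t)) := by
  have h₀ : (∫ t in Ioo (0 : ℝ) 1, (1 - x / (1 + t) - t / (x + t)))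
      = x * ∫ t in (0 : ℝ)..1, ((x + t)⁻¹ - (1 + t)⁻¹) := by
    rw [← intervalIntegral.integral_const_mul, intervalIntegral.integral_of_le zero_le_one,
      integral_Ioc_eq_integral_Ioo]
    refine setIntegral_congr_fun measurableSet_Ioo fun t ht => ?_
    have ht : 0 < t := ht.1
    field_simp
    ring
  have h₁ : (∫ t in Ioi (1 : ℝ), ((x + 1) / t - x / (1 + t) - 1 / (x + t)))
      = x * (∫ t in Ioi (1 : ℝ), ((0 + t)⁻¹ - (1 + t)⁻¹))
        + ∫ t in Ioi (1 : ℝ), ((0 + t)⁻¹ - (x + t)⁻¹) := by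
    rw [← integral_const_mul, ← integral_add
      ((integrableOn_Ioi_inv_add_sub_inv_add zero_le_one (by norm_num)).const_mul x)
      (integrableOn_Ioi_inv_add_sub_inv_add hx.le (by norm_num))]
    refine setIntegral_congr_fun measurableSet_Ioi fun t ht => ?_
    have ht : 0 < t := zero_lt_one.trans ht
    field_simp
    ring
  rw [h₀, h₁, integral_inv_add_sub_inv_add zero_le_one (by linarith) (by norm_num),
    integral_Ioi_inv_add_sub_inv_add zero_le_one (by norm_num),
    integral_Ioi_inv_add_sub_inv_add hx.le (by norm_num)]
  norm_num [add_comm x 1]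
  ring
end

section
/- If A is a 3×3 positive semidefinite Hermitian matrix of the form A = [[a,0,d],[0,b,0],[d̄,0,c]] with real a,b,c and complex d, then for any concave function f : [0,∞) → ℝ strong subadditivity holds: Tr f(A) + f(b) ≤ Tr f(B) + Tr f(C), where B = [[a,0],[0,b]] and C = [[b,0],[0,c]]. -/
open Matrix
open scoped ComplexOrder
open Polynomial


lemma charpoly_conj_aux {n R : Type*} [CommRing R] [Fintype n] [DecidableEq n]
    (U M V : Matrix n n R) (h : U * V = 1) :
    (U * M * V).charpoly = M.charpoly := by
  have hmap : (U.map (⇑(C : R →+* R[X]))) * (V.map (⇑(C : R →+* R[X]))) = 1 := by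
    rw [← Matrix.map_mul, h]
    simp
  have hcm : charmatrix (U * M * V)
      = (U.map (⇑(C : R →+* R[X]))) * charmatrix M * (V.map (⇑(C : R →+* R[X]))) := by
    simp only [charmatrix, mul_sub, sub_mul, RingHom.mapMatrix_apply, Matrix.map_mul]
    congr 1
    rw [mul_assoc, ((Matrix.scalar_commute (X : R[X]) (fun r => Commute.all _ r)
      (V.map (⇑(C : R →+* R[X]))))).eq, ← mul_assoc, hmap, one_mul]
  rw [Matrix.charpoly, Matrix.charpoly, hcm, det_mul, det_mul, mul_comm, ← mul_assoc]
  have h1 : (V.map (⇑(C : R →+* R[X]))).det * (U.map (⇑(C : R →+* R[X]))).det = 1 := by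
    rw [← det_mul, ← Matrix.map_mul, mul_eq_one_comm.mp h]
    simp
  rw [h1, one_mul]

lemma charpoly_eq_prod_eig {n : Type*} [Fintype n] [DecidableEq n] [LinearOrder n]
    {A : Matrix n n ℂ} (hA : A.IsHermitian) :
    A.charpoly = ∏ i, (X - C ((hA.eigenvalues i : ℂ))) := by
  have hU : (hA.eigenvectorUnitary : Matrix n n ℂ) * (star (hA.eigenvectorUnitary : Matrix n n ℂ)) = 1 :=
    (Matrix.mem_unitaryGroup_iff).mp hA.eigenvectorUnitary.2
  calc A.charpoly
      = ((hA.eigenvectorUnitary : Matrix n n ℂ) * diagonal (RCLike.ofReal ∘ hA.eigenvalues)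
        * (star (hA.eigenvectorUnitary : Matrix n n ℂ))).charpoly := by rw [← Unitary.conjStarAlgAut_apply (S := ℂ), ← hA.spectral_theorem]
    _ = (diagonal (RCLike.ofReal ∘ hA.eigenvalues)).charpoly := charpoly_conj_aux _ _ _ hU
    _ = ∏ i, (X - C ((hA.eigenvalues i : ℂ))) := by
        rw [Matrix.charpoly_of_upperTriangular _ (Matrix.blockTriangular_diagonal _)]
        simp

lemma concave_pair {f : ℝ → ℝ} (hconc : ConcaveOn ℝ (Set.Ici 0) f) {x y u : ℝ}
    (hx : (0:ℝ) ≤ x) (hxu : x ≤ u) (huy : u ≤ y) :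
    f x + f y ≤ f u + f (x + y - u) := by
  rcases eq_or_lt_of_le (hxu.trans huy) with h | h
  · have h1 : u = x := le_antisymm (h ▸ huy) hxu
    subst h1
    simp
  · have hyx : 0 < y - x := by linarith
    have ht0 : 0 ≤ (y - u) / (y - x) := div_nonneg (by linarith) hyx.le
    have ht1 : (y - u) / (y - x) ≤ 1 := by rw [div_le_one hyx]; linarith
    have hu : u = ((y - u) / (y - x)) * x + (1 - (y - u) / (y - x)) * y := by
      field_simp
      ring
    have hv : x + y - u = (1 - (y - u) / (y - x)) * x + ((y - u) / (y - x)) * y := by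
      field_simp
      ring
    have hxm : x ∈ Set.Ici (0:ℝ) := hx
    have hym : y ∈ Set.Ici (0:ℝ) := by simp only [Set.mem_Ici]; linarith
    have h1 : ((y - u) / (y - x)) • f x + (1 - (y - u) / (y - x)) • f y
        ≤ f (((y - u) / (y - x)) • x + (1 - (y - u) / (y - x)) • y) :=
      hconc.2 hxm hym ht0 (by linarith) (by ring)
    have h2 : (1 - (y - u) / (y - x)) • f x + ((y - u) / (y - x)) • f y
        ≤ f ((1 - (y - u) / (y - x)) • x + ((y - u) / (y - x)) • y) :=
      hconc.2 hxm hym (by linarith) ht0 (by ring)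
    rw [smul_eq_mul, smul_eq_mul, smul_eq_mul, smul_eq_mul, ← hu] at h1
    rw [smul_eq_mul, smul_eq_mul, smul_eq_mul, smul_eq_mul, ← hv] at h2
    linarith

/-- For a positive semidefinite matrix `A = [[a,0,d],[0,b,0],[d̄,0,c]]` and any concave
`f : [0,∞) → ℝ`, strong subadditivity `Tr f(A) + f(b) ≤ Tr f(B) + Tr f(C)` holds, with
`B = diag(a,b)` and `C = diag(b,c)`. -/
theorem ssa_special_matrix (a b c : ℝ) (d : ℂ)
    (A : Matrix (Fin 3) (Fin 3) ℂ)
    (hAdef : A = !![(a : ℂ), 0, d; 0, (b : ℂ), 0; star d, 0, (c : ℂ)])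
    (hA : A.PosSemidef)
    (f : ℝ → ℝ) (hconc : ConcaveOn ℝ (Set.Ici 0) f) :
    (∑ i, f (hA.1.eigenvalues i)) + f b ≤ (f a + f b) + (f b + f c) := by
  set e := hA.1.eigenvalues with he
  set D := Real.sqrt ((a - c)^2 + 4 * Complex.normSq d) with hDdef
  set l0 := (a + c - D)/2 with hl0
  set l1 := (a + c + D)/2 with hl1
  have hD0 : 0 ≤ D := Real.sqrt_nonneg _
  have hD2 : D^2 = (a - c)^2 + 4 * Complex.normSq d := Real.sq_sqrt (by nlinarith [Complex.normSq_nonneg d, sq_nonneg (a-c)])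
  have hs : l0 + l1 = a + c := by rw [hl0, hl1]; ring
  have hp : l0 * l1 = a * c - Complex.normSq d := by
    have h4 : l0 * l1 = ((a+c)^2 - D^2)/4 := by rw [hl0, hl1]; ring
    rw [h4, hD2]; ring
  -- charpoly computations
  have hchar1 : A.charpoly = ∏ i, (X - C ((e i : ℂ))) := charpoly_eq_prod_eig hA.1
  have hsC : ((l0:ℂ)) + ((l1:ℂ)) = (a:ℂ) + (c:ℂ) := by exact_mod_cast congrArg Complex.ofReal hs
  have hpC : ((l0:ℂ)) * ((l1:ℂ)) = (a:ℂ) * (c:ℂ) - d * star d := by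
    rw [show (star d) = starRingEnd ℂ d from rfl, Complex.mul_conj]
    exact_mod_cast congrArg Complex.ofReal hp
  have hC1 : C ((l0:ℂ)) + C ((l1:ℂ)) = C ((a:ℂ)) + C ((c:ℂ)) := by
    rw [← map_add, ← map_add, hsC]
  have hC2 : C ((l0:ℂ)) * C ((l1:ℂ)) = C ((a:ℂ)) * C ((c:ℂ)) - C d * C (star d) := by
    rw [← _root_.map_mul, ← _root_.map_mul, hpC, map_sub]
    simp [_root_.map_mul]
  have hcm : charmatrix A = !![X - C ((a:ℂ)), 0, -C d; 0, X - C ((b:ℂ)), 0;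
      -C (star d), 0, X - C ((c:ℂ))] := by
    subst hAdef
    ext i j
    fin_cases i <;> fin_cases j <;>
      simp [charmatrix_apply, Matrix.diagonal_apply]
  have hchar2 : A.charpoly = (X - C ((b:ℂ))) * ((X - C ((l0:ℂ))) * (X - C ((l1:ℂ)))) := by
    rw [Matrix.charpoly, hcm]
    norm_num [Matrix.det_fin_three, Complex.star_def, Matrix.cons_val_two, Matrix.tail_cons]
    simp only [Complex.star_def] at hC2
    linear_combination (C ((b:ℂ)) - X) * hC2 + (X^2 - X * C ((b:ℂ))) * hC1
  -- multiset of eigenvalues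
  have h1 : ((Multiset.map (fun x:ℝ => (x:ℂ)) (Finset.univ.val.map e)).map
      (fun z => X - C z)).prod = A.charpoly := by
    rw [hchar1, Multiset.map_map, Multiset.map_map, Finset.prod_eq_multiset_prod]
    rfl
  have h2 : ((Multiset.map (fun x:ℝ => (x:ℂ)) ({b, l0, l1} : Multiset ℝ)).map
      (fun z => X - C z)).prod = A.charpoly := by
    rw [hchar2]
    simp only [Multiset.insert_eq_cons, Multiset.map_cons, Multiset.map_singleton,
      Multiset.prod_cons, Multiset.prod_singleton]
  have hroots : Multiset.map (fun x:ℝ => (x:ℂ)) (Finset.univ.val.map e)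
      = Multiset.map (fun x:ℝ => (x:ℂ)) ({b, l0, l1} : Multiset ℝ) := by
    have := congrArg Polynomial.roots (h1.trans h2.symm)
    rwa [roots_multiset_prod_X_sub_C, roots_multiset_prod_X_sub_C] at this
  have hms : (Finset.univ.val.map e) = ({b, l0, l1} : Multiset ℝ) :=
    Multiset.map_injective Complex.ofReal_injective hroots
  -- sum rewriting
  have hsum : (∑ i, f (e i)) = f b + (f l0 + f l1) := by
    rw [Finset.sum_eq_multiset_sum]
    show (Multiset.map (f ∘ e) Finset.univ.val).sum = _
    rw [← Multiset.map_map, hms]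
    simp [Multiset.insert_eq_cons]
  -- nonnegativity
  have hl0mem : l0 ∈ Finset.univ.val.map e := by rw [hms]; simp
  obtain ⟨i, -, hi⟩ := Multiset.mem_map.mp hl0mem
  have hl0nn : 0 ≤ l0 := hi ▸ hA.eigenvalues_nonneg i
  -- bounds
  have hprodA : (a - l0) * (a - l1) = -Complex.normSq d := by
    linear_combination hp - a * hs
  have hprodC : (c - l0) * (c - l1) = -Complex.normSq d := by
    linear_combination hp - c * hs
  have hnsq : 0 ≤ Complex.normSq d := Complex.normSq_nonneg d
  have hll : l0 ≤ l1 := by rw [hl0, hl1]; linarith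
  have hla : l0 ≤ a := by nlinarith
  have hau : a ≤ l1 := by nlinarith
  have key : f l0 + f l1 ≤ f a + f c := by
    have := concave_pair hconc hl0nn hla hau
    have hc : l0 + l1 - a = c := by linarith
    rwa [hc] at this
  rw [hsum]
  linarith
end
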